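/- Let k ≥ 2 and let F be a strictly k-balanced k-uniform hypergraph with v vertices and h hyperedges, where h ≥ v−k+1 and Δ_{k−1}(F) ≥ 2, and let c_2 be sufficiently large in terms of v and h. Then for all sufficiently large n and every hyperedge f of K_n^k, the expected number of (⌈log n⌉, f)-clusters in H_{n,p} is at most n^{−2k}. -/

import Mathlib

open MeasureTheory Finset Filter

noncomputable section
attribute [local instance] Classical.propDecidable

/-- A `k`-uniform hypergraph: a finite vertex set (of naturals) together with a
set of hyperedges, each of which is a `k`-subset of the vertex set. -/
structure UnifHypergraph (k : ℕ) where
  verts : Finset ℕ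
  edges : Finset (Finset ℕ)
  edge_sub : ∀ e ∈ edges, e ⊆ verts
  edge_card : ∀ e ∈ edges, e.card = k

namespace UnifHypergraph

variable {k : ℕ}

/-- `F'` is a subgraph of `F`. -/
def IsSubgraph (F' F : UnifHypergraph k) : Prop :=
  F'.verts ⊆ F.verts ∧ F'.edges ⊆ F.edges

/-- The degree `d_F(U)` of a vertex set `U`: the number of hyperedges containing `U`. -/
def deg (F : UnifHypergraph k) (U : Finset ℕ) : ℕ :=
  (F.edges.filter fun e => U ⊆ e).card

/-- The maximum `i`-degree `Δ_i(F)`. -/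
def maxDeg (F : UnifHypergraph k) (i : ℕ) : ℕ :=
  (F.verts.powersetCard i).sup F.deg

/-- `F` is strictly `k`-balanced. -/
def StrictlyBalanced (F : UnifHypergraph k) : Prop :=
  k + 1 ≤ F.verts.card ∧
  ∀ F' : UnifHypergraph k, F'.IsSubgraph F → F' ≠ F → k + 1 ≤ F'.verts.card →
    ((F'.edges.card : ℝ) - 1) / ((F'.verts.card : ℝ) - (k : ℝ)) <
      ((F.edges.card : ℝ) - 1) / ((F.verts.card : ℝ) - (k : ℝ))

/-- `h_i`: the maximum number of edges of a proper subgraph of `F` on `i` vertices. -/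
def hsub (F : UnifHypergraph k) (i : ℕ) : ℕ :=
  sSup {m | ∃ F' : UnifHypergraph k, F'.IsSubgraph F ∧ F' ≠ F ∧
    F'.verts.card = i ∧ F'.edges.card = m}

/-- `δ_i := i - k - (h_i - 1)(v-k)/(h-1)`. -/
def deltaI (F : UnifHypergraph k) (i : ℕ) : ℝ :=
  (i : ℝ) - (k : ℝ) -
    ((F.hsub i : ℝ) - 1) * ((F.verts.card : ℝ) - (k : ℝ)) / ((F.edges.card : ℝ) - 1)

/-- `δ := min_{k+1 ≤ i ≤ v} δ_i`. -/
def deltaMin (F : UnifHypergraph k) : ℝ :=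
  sInf {x | ∃ i : ℕ, k + 1 ≤ i ∧ i ≤ F.verts.card ∧ x = F.deltaI i}

end UnifHypergraph

variable {k : ℕ} {V : Type*} [DecidableEq V]

/-- The edge set of the image of `F` under a vertex map `φ`. -/
def copyEdges (F : UnifHypergraph k) (φ : ℕ → V) : Finset (Finset V) :=
  F.edges.image fun e => e.image φ

/-- `A` is (the edge set of) a copy of `F` inside the edge set `E`. -/
def IsCopy (F : UnifHypergraph k) (E A : Finset (Finset V)) : Prop :=
  ∃ φ : ℕ → V, Set.InjOn φ F.verts ∧ A = copyEdges F φ ∧ A ⊆ E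

/-- `E` contains a copy of `F`. -/
def HasCopy (F : UnifHypergraph k) (E : Finset (Finset V)) : Prop :=
  ∃ A, IsCopy F E A

/-- The greedy `F`-free process run on a list of candidate hyperedges: each edge
is added unless it would create a copy of `F`. -/
def greedy (F : UnifHypergraph k) (L : List (Finset V)) : Finset (Finset V) :=
  L.foldl (fun G e => if HasCopy F (insert e G) then G else insert e G) ∅

/-- An `(r,f)`-cluster (given by the edge sets of its `r` copies of `F`). -/
def IsCluster (F : UnifHypergraph k) (E : Finset (Finset V)) (f : Finset V) (r : ℕ)
    (c : Fin r → Finset (Finset V)) : Prop :=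
  (∀ i, IsCopy F E (c i) ∧ f ∈ c i) ∧
  (∀ i : Fin r, 0 < (i : ℕ) → ∃ g ∈ c i, ∀ j, j < i → g ∉ c j)

/-- `E` contains an `(r,f)`-cluster. -/
def HasCluster (F : UnifHypergraph k) (E : Finset (Finset V)) (f : Finset V) (r : ℕ) : Prop :=
  ∃ c : Fin r → Finset (Finset V), IsCluster F E f r c

/-- The number of `(r,f)`-clusters in `E`. -/
def clusterCount (F : UnifHypergraph k) (E : Finset (Finset V)) (f : Finset V) (r : ℕ) : ℕ :=
  Set.ncard {c : Fin r → Finset (Finset V) | IsCluster F E f r c}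

/-- The hyperedges of the complete `k`-uniform hypergraph on `[n] = Fin n`. -/
def kSets (n k : ℕ) : Finset (Finset (Fin n)) :=
  Finset.univ.powersetCard k

/-- The probability space of independent uniform-`[0,1]` birthtimes on the
(potential) hyperedges of `K_n^k`. -/
def birthμ (n : ℕ) : Measure (Finset (Fin n) → ℝ) :=
  Measure.pi fun _ => volume.restrict (Set.Icc (0 : ℝ) 1)

/-- The binomial random hypergraph `H_{n,p}`: the hyperedges with birthtime at most `p`. -/
def Hnp (n k : ℕ) (p : ℝ) (ω : Finset (Fin n) → ℝ) : Finset (Finset (Fin n)) :=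
  (kSets n k).filter fun e => ω e ≤ p

/-- `H_{n,p}^-`: delete from `H_{n,p}` every hyperedge lying in a copy of `F`. -/
def HnpMinus (F : UnifHypergraph k) (n : ℕ) (p : ℝ) (ω : Finset (Fin n) → ℝ) :
    Finset (Finset (Fin n)) :=
  (Hnp n k p ω).filter fun e => ¬ ∃ A, IsCopy F (Hnp n k p ω) A ∧ e ∈ A

/-- The greedy `F`-free process `R_{n,p}`: process the hyperedges with birthtime
at most `p` in increasing order of birthtime, adding each unless it creates a copy of `F`. -/
def Rproc (F : UnifHypergraph k) (n : ℕ) (β : Finset (Fin n) → ℝ) (p : ℝ) :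
    Finset (Finset (Fin n)) :=
  greedy F ((((kSets n k).filter fun e => β e ≤ p).toList).mergeSort fun a b => β a ≤ β b)

/-- The maximum `i`-degree of a hypergraph on vertex set `Fin n` given by its edge set. -/
def hostMaxDeg {n : ℕ} (E : Finset (Finset (Fin n))) (i : ℕ) : ℕ :=
  ((Finset.univ : Finset (Fin n)).powersetCard i).sup fun U =>
    (E.filter fun e => U ⊆ e).card

/-- The edge probability `p := 1/(c₂ (n^{v-k} log n)^{1/(h-1)})`. -/
def pval (c₂ : ℝ) (k v h n : ℕ) : ℝ :=
  1 / (c₂ * (((n : ℝ) ^ ((v : ℝ) - (k : ℝ)) * Real.log n) ^ ((1 : ℝ) / ((h : ℝ) - 1))))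

/-- The degree bound `t := c₁ n p (log n)^{3/(d-1)}`. -/
def tval (c₁ c₂ : ℝ) (k v h d n : ℕ) : ℝ :=
  c₁ * (n : ℝ) * pval c₂ k v h n * Real.log n ^ ((3 : ℝ) / ((d : ℝ) - 1))

/-- The subgraph `F̂` of `F`: all vertices of `F`, and those hyperedges meeting `U`
in at most `k-2` vertices. -/
def hatF (F : UnifHypergraph k) (U : Finset ℕ) : UnifHypergraph k where
  verts := F.verts
  edges := F.edges.filter fun e => (e ∩ U).card ≤ k - 2
  edge_sub := fun e he => F.edge_sub e (Finset.mem_filter.mp he).1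
  edge_card := fun e he => F.edge_card e (Finset.mem_filter.mp he).1

/-- The neighbourhood `N_F(U)` of `U` in `F`. -/
def nbhd (F : UnifHypergraph k) (U : Finset ℕ) : Finset ℕ :=
  F.verts.filter fun x => insert x U ∈ F.edges

/-- `S(H,T,V')`: the set of (edge sets of) copies of `F̂` in the edge set `E` mapping
`u i ↦ v' i`, `N_F(U)` into `T`, and `V(F) \ N_F(U)` outside `T`. -/
def Scopies (F : UnifHypergraph k) (U : Finset ℕ) (u : Fin (k - 1) → ℕ) {n : ℕ}
    (T : Finset (Fin n)) (v' : Fin (k - 1) → Fin n) (E : Finset (Finset (Fin n))) :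
    Set (Finset (Finset (Fin n))) :=
  {A | ∃ φ : ℕ → Fin n, Set.InjOn φ F.verts ∧
    A = copyEdges (hatF F U) φ ∧ A ⊆ E ∧
    (∀ i, φ (u i) = v' i) ∧
    (∀ x ∈ nbhd F U, φ x ∈ T) ∧
    (∀ x ∈ F.verts, x ∉ nbhd F U → φ x ∉ T)}

/-!
By linearity of expectation, the expected number of `(r, f)`-clusters in `H_{n,p}` is the sum,
over all `(r, f)`-clusters `c` of the complete hypergraph, of `p ^ |⋃ c|`. Splitting off the last
copy of a cluster, this sum is at most `q ^ r`, where `q` bounds, over all edge sets `D ∋ f`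
spanning at most `r e(F) k` vertices, the weighted number `∑ p ^ |A \ D|` of copies `A` of `F`
through `f` not contained in `D`. Group these copies by how they overlap `D`: the edge of `F` sent
onto `f`, the set `W` of vertices sent into `V(D)` and the set `E'` of edges sent into `D`. Such a
class has at most `k^k M^(|W|-k) n^(v-|W|)` members, each of weight `p ^ (h - |E'|)`. If `|W| = k`
this is at most `k^k / log n` by the choice of `p`; otherwise `(W, E')` is a proper subgraph of `F`,
and strict balancedness leaves a factor `n^(-b)`, `b > 0`, against polylogarithmic losses. Hence
`q ≤ (log n)^(-1/2)`, and `(log n)^(-⌈log n⌉/2) ≤ n^(-2k)`.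
-/

section Copies

variable {F : UnifHypergraph k} {φ φ' : ℕ → V}

lemma copyEdges_congr (h : Set.EqOn φ φ' F.verts) : copyEdges F φ = copyEdges F φ' :=
  image_congr fun e he =>
    image_congr fun _ hx => h (F.edge_sub e (mem_coe.mp he) hx)

lemma injOn_image_edges (hφ : Set.InjOn φ F.verts) :
    Set.InjOn (fun e : Finset ℕ => e.image φ) F.edges :=
  (image_injOn_powerset_of_injOn hφ).mono fun e he =>
    mem_powerset.mpr (F.edge_sub e he)

lemma card_copyEdges (hφ : Set.InjOn φ F.verts) : (copyEdges F φ).card = F.edges.card :=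
  card_image_of_injOn (injOn_image_edges hφ)

lemma card_of_mem_copyEdges (hφ : Set.InjOn φ F.verts) {g : Finset V}
    (hg : g ∈ copyEdges F φ) : g.card = k := by
  obtain ⟨e, he, rfl⟩ := mem_image.mp hg
  rw [card_image_of_injOn (hφ.mono (by exact_mod_cast F.edge_sub e he)), F.edge_card e he]

end Copies

section Clusters

variable {F : UnifHypergraph k} {E : Finset (Finset V)} {f : Finset V} {r : ℕ}

def IsFreshCopy (F : UnifHypergraph k) (E : Finset (Finset V)) (f : Finset V)
    (D A : Finset (Finset V)) : Prop :=
  IsCopy F E A ∧ f ∈ A ∧ ¬ A ⊆ D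

lemma biUnion_snoc (c : Fin r → Finset (Finset V)) (A : Finset (Finset V)) :
    univ.biUnion (Fin.snoc c A : Fin (r + 1) → Finset (Finset V)) =
      univ.biUnion c ∪ A := by
  ext g
  simp only [mem_biUnion, mem_univ, true_and, mem_union, Fin.exists_fin_succ',
    Fin.snoc_castSucc, Fin.snoc_last]

lemma isCluster_snoc_iff {c : Fin r → Finset (Finset V)} {A : Finset (Finset V)} :
    IsCluster F E f (r + 1) (Fin.snoc c A) ↔
      IsCluster F E f r c ∧ IsFreshCopy F E f (univ.biUnion c) A := by
  simp only [IsCluster, IsFreshCopy, Fin.forall_fin_succ', Fin.snoc_castSucc, Fin.snoc_last,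
    Fin.val_castSucc, Fin.castSucc_lt_castSucc_iff, Fin.castSucc_lt_last,
    not_lt_of_ge (Fin.le_last _), false_implies, and_true, forall_const, not_subset,
    mem_biUnion, mem_univ, true_and, not_exists]
  constructor
  · rintro ⟨⟨hc, hA, hfA⟩, hc', hnew⟩
    refine ⟨⟨hc, hc'⟩, hA, hfA, ?_⟩
    rcases r.eq_zero_or_pos with rfl | hr
    · exact ⟨f, hfA, fun i => i.elim0⟩
    · exact hnew hr
  · rintro ⟨⟨hc, hc'⟩, hA, hfA, hnew⟩
    exact ⟨⟨hc, hA, hfA⟩, hc', fun _ => hnew⟩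

lemma isCluster_iff_univ [Fintype V] {c : Fin r → Finset (Finset V)} :
    IsCluster F E f r c ↔ IsCluster F univ f r c ∧ univ.biUnion c ⊆ E := by
  simp only [IsCluster, IsCopy, subset_univ, and_true, biUnion_subset_iff_forall_subset,
    mem_univ, forall_const, ← and_assoc, exists_and_right, forall_and]
  tauto

lemma IsCluster.card_biUnion_le {c : Fin r → Finset (Finset V)} (hc : IsCluster F E f r c) :
    (univ.biUnion c).card ≤ r * F.edges.card := by
  refine (card_biUnion_le_card_mul _ _ F.edges.card fun i _ => ?_).trans (by simp)
  obtain ⟨φ, hφ, hci, -⟩ := (hc.1 i).1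
  rw [hci, card_copyEdges hφ]

lemma IsCluster.card_of_mem_biUnion {c : Fin r → Finset (Finset V)} (hc : IsCluster F E f r c)
    {g : Finset V} (hg : g ∈ univ.biUnion c) : g.card = k := by
  obtain ⟨i, -, hgi⟩ := mem_biUnion.mp hg
  obtain ⟨φ, hφ, hci, -⟩ := (hc.1 i).1
  exact card_of_mem_copyEdges hφ (hci ▸ hgi)

lemma IsCluster.card_verts_le {c : Fin r → Finset (Finset V)} (hc : IsCluster F E f r c) :
    ((univ.biUnion c).biUnion id).card ≤ r * F.edges.card * k :=
  (card_biUnion_le_card_mul _ _ _ fun _ hg => (hc.card_of_mem_biUnion hg).le).trans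
    (Nat.mul_le_mul_right k hc.card_biUnion_le)

end Clusters

section ShapeSums

variable [Fintype V]

def clusterShapeSum (F : UnifHypergraph k) (p : ℝ) (f : Finset V) (r : ℕ) : ℝ :=
  ∑ c ∈ univ.filter (IsCluster F univ f r), p ^ (univ.biUnion c).card

def freshCopySum (F : UnifHypergraph k) (p : ℝ) (f : Finset V) (D : Finset (Finset V)) : ℝ :=
  ∑ A ∈ univ.filter (IsFreshCopy F univ f D), p ^ (A \ D).card

lemma clusterShapeSum_succ (F : UnifHypergraph k) (p : ℝ) (f : Finset V) (r : ℕ) :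
    clusterShapeSum F p f (r + 1) =
      ∑ c ∈ univ.filter (IsCluster F univ f r),
        p ^ (univ.biUnion c).card * freshCopySum F p f (univ.biUnion c) := by
  rw [clusterShapeSum, sum_filter, ← (Fin.snocEquiv fun _ => Finset (Finset V)).sum_comp,
    Fintype.sum_prod_type, sum_comm, sum_filter]
  refine sum_congr rfl fun c _ => ?_
  have hsnoc : ∀ A, (Fin.snocEquiv fun _ => Finset (Finset V)) (A, c) = Fin.snoc c A :=
    fun _ => rfl
  by_cases hc : IsCluster F univ f r c
  · simp only [hsnoc, isCluster_snoc_iff, hc, true_and, biUnion_snoc, if_true, freshCopySum,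
      mul_sum, sum_filter, mul_ite, mul_zero]
    refine sum_congr rfl fun A _ => if_ctx_congr Iff.rfl (fun _ => ?_) fun _ => rfl
    rw [← pow_add, union_comm, ← card_sdiff_add_card, add_comm]
  · simp [hsnoc, isCluster_snoc_iff, hc]

lemma clusterCount_eq_card (F : UnifHypergraph k) (E : Finset (Finset V)) (f : Finset V)
    (r : ℕ) :
    clusterCount F E f r =
      {c ∈ univ.filter (IsCluster F univ f r) | univ.biUnion c ⊆ E}.card := by
  rw [clusterCount, ← Set.ncard_coe_finset]
  congr 1
  ext c
  simp only [Set.mem_ofPred_eq, coe_filter]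
  exact isCluster_iff_univ.trans (and_congr_left' (by simp))

variable {F : UnifHypergraph k} {p q : ℝ} {f : Finset V}

lemma freshCopySum_nonneg (hp0 : 0 ≤ p) (D : Finset (Finset V)) : 0 ≤ freshCopySum F p f D :=
  sum_nonneg fun _ _ => pow_nonneg hp0 _

lemma freshCopySum_empty_le (hp0 : 0 ≤ p) (hp1 : p ≤ 1) (hh : 2 ≤ F.edges.card) :
    freshCopySum F p f ∅ ≤ freshCopySum F p f {f} := by
  have hsub : univ.filter (IsFreshCopy F univ f ∅) ⊆
      univ.filter (IsFreshCopy F univ f {f}) := by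
    intro A hA
    obtain ⟨⟨φ, hφ, rfl, -⟩, hfA, -⟩ := (mem_filter.mp hA).2
    refine mem_filter.mpr ⟨mem_univ _, ⟨φ, hφ, rfl, subset_univ _⟩, hfA,
      fun hA₁ => ?_⟩
    have := card_le_card hA₁
    rw [card_copyEdges hφ, card_singleton] at this
    omega
  calc freshCopySum F p f ∅
      ≤ ∑ A ∈ univ.filter (IsFreshCopy F univ f ∅), p ^ (A \ {f}).card :=
        sum_le_sum fun A _ => pow_le_pow_of_le_one hp0 hp1
          (card_le_card (sdiff_subset_sdiff subset_rfl (empty_subset _)))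
    _ ≤ freshCopySum F p f {f} :=
        sum_le_sum_of_subset_of_nonneg hsub fun _ _ _ => pow_nonneg hp0 _

lemma clusterShapeSum_one (F : UnifHypergraph k) (p : ℝ) (f : Finset V) :
    clusterShapeSum F p f 1 = freshCopySum F p f ∅ := by
  simp [clusterShapeSum_succ, IsCluster, filter_singleton]

lemma clusterShapeSum_le_pow (hp0 : 0 ≤ p) (hp1 : p ≤ 1) (hh : 2 ≤ F.edges.card)
    (hf : f.card = k) {r₀ : ℕ} (hq : ∀ D : Finset (Finset V), f ∈ D →
      (D.biUnion id).card ≤ r₀ * F.edges.card * k → freshCopySum F p f D ≤ q)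
    {r : ℕ} (hr : 1 ≤ r) (hrr : r ≤ r₀) :
    clusterShapeSum F p f r ≤ q ^ r := by
  have hq₁ : freshCopySum F p f {f} ≤ q :=
    hq _ (mem_singleton_self f) (by
      rw [singleton_biUnion, id, hf]
      exact Nat.le_mul_of_pos_left k (Nat.mul_pos (by omega) (by omega)))
  induction r, hr using Nat.le_induction with
  | base =>
    rw [clusterShapeSum_one, pow_one]
    exact (freshCopySum_empty_le hp0 hp1 hh).trans hq₁
  | succ r hr ih =>
    have hfresh : ∀ c ∈ univ.filter (IsCluster F univ f r),
        freshCopySum F p f (univ.biUnion c) ≤ q := by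
      intro c hc
      have hc := (mem_filter.mp hc).2
      refine hq _ (mem_biUnion.mpr ⟨⟨0, hr⟩, mem_univ _, (hc.1 _).2⟩)
        (hc.card_verts_le.trans ?_)
      gcongr
      omega
    calc clusterShapeSum F p f (r + 1)
        ≤ ∑ c ∈ univ.filter (IsCluster F univ f r),
            p ^ (univ.biUnion c).card * q := by
          rw [clusterShapeSum_succ]
          exact sum_le_sum fun c hc =>
            mul_le_mul_of_nonneg_left (hfresh c hc) (pow_nonneg hp0 _)
      _ = clusterShapeSum F p f r * q := (sum_mul ..).symm
      _ ≤ q ^ r * q :=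
          mul_le_mul_of_nonneg_right (ih (by omega)) ((freshCopySum_nonneg hp0 _).trans hq₁)
      _ = q ^ (r + 1) := (pow_succ q r).symm

end ShapeSums

section FirstMoment

variable {n : ℕ} {p : ℝ}

instance : IsProbabilityMeasure (volume.restrict (Set.Icc (0 : ℝ) 1)) :=
  ⟨by simp [Measure.restrict_apply MeasurableSet.univ]⟩

instance (n : ℕ) : IsProbabilityMeasure (birthμ n) := by
  unfold birthμ
  infer_instance

lemma setOf_subset_Hnp {U : Finset (Finset (Fin n))} (hU : U ⊆ kSets n k) :
    {ω | U ⊆ Hnp n k p ω} = (U : Set (Finset (Fin n))).pi fun _ => Set.Iic p := by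
  ext ω
  simp only [Set.mem_ofPred_eq, Set.mem_pi, mem_coe, Set.mem_Iic, subset_iff, Hnp,
    mem_filter]
  exact forall₂_congr fun e he => and_iff_right (hU he)

lemma measurableSet_pi_Iic (U : Finset (Finset (Fin n))) (p : ℝ) :
    MeasurableSet ((U : Set (Finset (Fin n))).pi fun _ => Set.Iic p) :=
  MeasurableSet.pi U.countable_toSet fun _ _ => measurableSet_Iic

lemma ite_subset_Hnp_eq_indicator {U : Finset (Finset (Fin n))} (hU : U ⊆ kSets n k) :
    (fun ω => if U ⊆ Hnp n k p ω then (1 : ℝ) else 0) =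
      ((U : Set (Finset (Fin n))).pi fun _ => Set.Iic p).indicator 1 := by
  rw [← setOf_subset_Hnp hU]
  ext ω
  simp [Set.indicator_apply]

lemma integral_ite_subset_Hnp (hp0 : 0 ≤ p) (hp1 : p ≤ 1) {U : Finset (Finset (Fin n))}
    (hU : U ⊆ kSets n k) :
    ∫ ω, (if U ⊆ Hnp n k p ω then 1 else 0 : ℝ) ∂birthμ n = p ^ U.card := by
  have hvol : volume.restrict (Set.Icc (0 : ℝ) 1) (Set.Iic p) = ENNReal.ofReal p := by
    have : Set.Iic p ∩ Set.Icc 0 1 = Set.Icc 0 p := by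
      ext x
      simp only [Set.mem_inter_iff, Set.mem_Iic, Set.mem_Icc]
      grind
    rw [Measure.restrict_apply measurableSet_Iic, this, Real.volume_Icc, sub_zero]
  rw [ite_subset_Hnp_eq_indicator hU, integral_indicator_one (measurableSet_pi_Iic U p),
    measureReal_def, birthμ, Measure.pi_pi_finset, hvol, prod_const, ENNReal.toReal_pow,
    ENNReal.toReal_ofReal hp0]

lemma integral_clusterCount (hp0 : 0 ≤ p) (hp1 : p ≤ 1) (F : UnifHypergraph k)
    (f : Finset (Fin n)) (r : ℕ) :
    ∫ ω, (clusterCount F (Hnp n k p ω) f r : ℝ) ∂birthμ n = clusterShapeSum F p f r := by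
  simp_rw [clusterCount_eq_card, natCast_card_filter]
  have hU : ∀ c ∈ univ.filter (IsCluster F univ f r),
      univ.biUnion c ⊆ kSets n k := fun c hc g hg => by
    simp only [kSets, mem_powersetCard, subset_univ, true_and]
    exact (mem_filter.mp hc).2.card_of_mem_biUnion hg
  rw [integral_finsetSum _ fun c hc => by
    rw [ite_subset_Hnp_eq_indicator (hU c hc)]
    exact (integrable_const 1).indicator (measurableSet_pi_Iic _ p)]
  exact sum_congr rfl fun c hc => integral_ite_subset_Hnp hp0 hp1 (hU c hc)

end FirstMoment

section OverlapPatterns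

variable {F : UnifHypergraph k} {f : Finset V} {D : Finset (Finset V)} {φ : ℕ → V}

-- For injective `φ` and `f` the image of an edge of `F`, the first component is that edge.
def overlapPattern (F : UnifHypergraph k) (f : Finset V) (D : Finset (Finset V)) (φ : ℕ → V) :
    Finset ℕ × Finset ℕ × Finset (Finset ℕ) :=
  (F.verts.filter (φ · ∈ f), F.verts.filter (φ · ∈ D.biUnion id),
    F.edges.filter (·.image φ ∈ D))

def overlapPatterns (F : UnifHypergraph k) :
    Finset (Finset ℕ × Finset ℕ × Finset (Finset ℕ)) :=
  (F.edges ×ˢ F.verts.powerset ×ˢ F.edges.powerset).filter fun T =>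
    T.1 ⊆ T.2.1 ∧ T.2.2 ≠ F.edges ∧ ∀ e ∈ T.2.2, e ⊆ T.2.1

lemma filter_verts_mem_image_eq (hφ : Set.InjOn φ F.verts) {e : Finset ℕ} (he : e ∈ F.edges) :
    F.verts.filter (φ · ∈ e.image φ) = e := by
  ext x
  simp only [mem_filter, mem_image]
  constructor
  · rintro ⟨hx, y, hy, hyx⟩
    rwa [← hφ (F.edge_sub e he hy) hx hyx]
  · exact fun hx => ⟨F.edge_sub e he hx, x, hx, rfl⟩

lemma overlapPattern_mem (hφ : Set.InjOn φ F.verts) {E : Finset (Finset V)}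
    (hA : IsFreshCopy F E f D (copyEdges F φ)) (hfD : f ∈ D) :
    overlapPattern F f D φ ∈ overlapPatterns F := by
  obtain ⟨-, hfA, hAD⟩ := hA
  obtain ⟨e₀, he₀, rfl⟩ := mem_image.mp hfA
  obtain ⟨g, hgA, hgD⟩ := not_subset.mp hAD
  obtain ⟨e, he, rfl⟩ := mem_image.mp hgA
  have hsub : ∀ e' ∈ D, ∀ x ∈ e', x ∈ D.biUnion id := fun e' he' x hx =>
    mem_biUnion.mpr ⟨e', he', hx⟩
  simp only [overlapPattern, overlapPatterns, mem_filter, mem_product,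
    mem_powerset, filter_verts_mem_image_eq hφ he₀, filter_subset, and_true]
  refine ⟨he₀, fun x hx => mem_filter.mpr
      ⟨F.edge_sub _ he₀ hx, hsub _ hfD _ (mem_image_of_mem φ hx)⟩,
    fun h => hgD (by rw [← h] at he; exact (mem_filter.mp he).2),
    fun e' he' x hx => mem_filter.mpr
      ⟨F.edge_sub _ he'.1 hx, hsub _ he'.2 _ (mem_image_of_mem φ hx)⟩⟩

lemma card_copyEdges_sdiff (hφ : Set.InjOn φ F.verts) :
    (copyEdges F φ \ D).card = F.edges.card - (overlapPattern F f D φ).2.2.card := by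
  rw [sdiff_eq_filter, copyEdges, filter_image,
    card_image_of_injOn ((injOn_image_edges hφ).mono (coe_subset.mpr (filter_subset _ _))),
    ← card_filter_add_card_filter_not (s := F.edges) (·.image φ ∈ D), overlapPattern]
  simp

end OverlapPatterns

lemma prod_ite_mem_ite_mem {s t u : Finset ℕ} (htu : t ⊆ u) (hus : u ⊆ s) (a b c : ℕ) :
    ∏ x ∈ s, (if x ∈ t then a else if x ∈ u then b else c) =
      a ^ t.card * b ^ (u.card - t.card) * c ^ (s.card - u.card) := by
  have ht : ∏ x ∈ t, (if x ∈ t then a else if x ∈ u then b else c) = a ^ t.card :=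
    prod_eq_pow_card fun x hx => if_pos hx
  have hu : ∏ x ∈ u \ t, (if x ∈ t then a else if x ∈ u then b else c) =
      b ^ (u.card - t.card) := by
    rw [← card_sdiff_of_subset htu]
    exact prod_eq_pow_card fun x hx => by
      rw [Finset.mem_sdiff] at hx; rw [if_neg hx.2, if_pos hx.1]
  have hs : ∏ x ∈ s \ u, (if x ∈ t then a else if x ∈ u then b else c) =
      c ^ (s.card - u.card) := by
    rw [← card_sdiff_of_subset hus]
    exact prod_eq_pow_card fun x hx => by
      rw [Finset.mem_sdiff] at hx; rw [if_neg fun h => hx.2 (htu h), if_neg hx.2]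
  rw [← prod_sdiff hus, ← prod_sdiff htu, ht, hu, hs]
  ring

def extendVerts {α : Type*} [Nonempty α] (F : UnifHypergraph k) (ψ : F.verts → α) :
    ℕ → α :=
  Function.extend Subtype.val ψ fun _ => Classical.arbitrary α

lemma extendVerts_apply {α : Type*} [Nonempty α] {F : UnifHypergraph k} (ψ : F.verts → α)
    (x : F.verts) : extendVerts F ψ x = ψ x :=
  Subtype.val_injective.extend_apply _ _ _

def overlapBound (k v h N M w h' : ℕ) (p : ℝ) : ℝ :=
  (k : ℝ) ^ k * (M : ℝ) ^ (w - k) * (N : ℝ) ^ (v - w) * p ^ (h - h')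

lemma overlapBound_nonneg {k v h N M w h' : ℕ} {p : ℝ} (hp : 0 ≤ p) :
    0 ≤ overlapBound k v h N M w h' p := by
  rw [overlapBound]
  positivity

section Counting

variable [Fintype V] [Nonempty V] {F : UnifHypergraph k} {f : Finset V} {D : Finset (Finset V)}
  {M : ℕ}

lemma card_filter_overlapPattern_le {T : Finset ℕ × Finset ℕ × Finset (Finset ℕ)}
    (hT : T ∈ overlapPatterns F) (hf : f.card = k) (hM : (D.biUnion id).card ≤ M) :
    (univ.filter fun ψ : F.verts → V => overlapPattern F f D (extendVerts F ψ) = T).card ≤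
      k ^ k * M ^ (T.2.1.card - k) * Fintype.card V ^ (F.verts.card - T.2.1.card) := by
  obtain ⟨e₀, W, E'⟩ := T
  simp only [overlapPatterns, mem_filter, mem_product, mem_powerset] at hT
  obtain ⟨⟨he₀, hW, -⟩, he₀W, -, -⟩ := hT
  let B : F.verts → Finset V := fun x =>
    if x.1 ∈ e₀ then f else if x.1 ∈ W then D.biUnion id else univ
  have hfiber : (univ.filter fun ψ : F.verts → V =>
      overlapPattern F f D (extendVerts F ψ) = (e₀, W, E')) ⊆ Fintype.piFinset B := by
    intro ψ hψ
    have hpat := (mem_filter.mp hψ).2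
    simp only [overlapPattern, Prod.mk.injEq] at hpat
    obtain ⟨rfl, rfl, -⟩ := hpat
    refine Fintype.mem_piFinset.mpr fun x => ?_
    simp only [B, mem_filter, extendVerts_apply, x.2, true_and]
    split_ifs with h₁ h₂
    exacts [h₁, h₂, mem_univ _]
  calc _ ≤ (Fintype.piFinset B).card := card_le_card hfiber
    _ = ∏ x ∈ F.verts, (if x ∈ e₀ then f.card else
          if x ∈ W then (D.biUnion id).card else Fintype.card V) := by
        rw [Fintype.card_piFinset, ← prod_coe_sort F.verts]
        exact Fintype.prod_congr _ _ fun x => by dsimp only [B]; split_ifs <;> rfl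
    _ ≤ ∏ x ∈ F.verts, (if x ∈ e₀ then k else if x ∈ W then M else Fintype.card V) :=
        prod_le_prod' fun x _ => by split_ifs <;> simp [hf, hM]
    _ = _ := by rw [prod_ite_mem_ite_mem he₀W hW, F.edge_card e₀ he₀]

lemma freshCopySum_le_sum_overlapBound {p : ℝ} (hp0 : 0 ≤ p) (hf : f.card = k) (hfD : f ∈ D)
    (hM : (D.biUnion id).card ≤ M) :
    freshCopySum F p f D ≤ ∑ T ∈ overlapPatterns F,
      overlapBound k F.verts.card F.edges.card (Fintype.card V) M T.2.1.card T.2.2.card p := by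
  set Ψ := univ.filter fun ψ : F.verts → V => Set.InjOn (extendVerts F ψ) F.verts ∧
    IsFreshCopy F univ f D (copyEdges F (extendVerts F ψ))
  have hcopies : univ.filter (IsFreshCopy F univ f D) ⊆
      Ψ.image fun ψ => copyEdges F (extendVerts F ψ) := by
    intro A hA
    obtain ⟨φ, hφ, rfl, -⟩ := (mem_filter.mp hA).2.1
    have heq : Set.EqOn φ (extendVerts F fun x => φ x) F.verts :=
      fun x hx => (extendVerts_apply (fun x : F.verts => φ x) ⟨x, hx⟩).symm
    refine mem_image.mpr ⟨fun x => φ x, mem_filter.mpr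
      ⟨mem_univ _, hφ.congr heq, ?_⟩, (copyEdges_congr heq).symm⟩
    rw [← copyEdges_congr heq]
    exact (mem_filter.mp hA).2
  have hmaps : ∀ ψ ∈ Ψ, overlapPattern F f D (extendVerts F ψ) ∈ overlapPatterns F :=
    fun ψ hψ => overlapPattern_mem (mem_filter.mp hψ).2.1 (mem_filter.mp hψ).2.2 hfD
  calc freshCopySum F p f D
      ≤ ∑ A ∈ Ψ.image fun ψ => copyEdges F (extendVerts F ψ), p ^ (A \ D).card :=
        sum_le_sum_of_subset_of_nonneg hcopies fun _ _ _ => pow_nonneg hp0 _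
    _ ≤ ∑ ψ ∈ Ψ, p ^ (copyEdges F (extendVerts F ψ) \ D).card :=
        sum_image_le_of_nonneg fun _ _ => pow_nonneg hp0 _
    _ = ∑ ψ ∈ Ψ, p ^ (F.edges.card - (overlapPattern F f D (extendVerts F ψ)).2.2.card) :=
        sum_congr rfl fun ψ hψ => by
          rw [card_copyEdges_sdiff (mem_filter.mp hψ).2.1]
    _ = ∑ T ∈ overlapPatterns F, ((Ψ.filter fun ψ =>
          overlapPattern F f D (extendVerts F ψ) = T).card : ℝ) *
            p ^ (F.edges.card - T.2.2.card) := by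
        rw [← sum_fiberwise_of_maps_to' hmaps fun T => p ^ (F.edges.card - T.2.2.card)]
        simp only [sum_const, nsmul_eq_mul]
    _ ≤ _ := sum_le_sum fun T hT => by
        rw [overlapBound]
        gcongr
        exact_mod_cast (card_le_card (filter_subset_filter _ (subset_univ Ψ))).trans
          (card_filter_overlapPattern_le hT hf hM)

end Counting

section EdgeProbability

open Real

variable {c₂ : ℝ} {v h n : ℕ}

lemma natCast_pos_of_one_le_log (hL : 1 ≤ log n) : (0 : ℝ) < n :=
  Nat.cast_pos.mpr (Nat.pos_of_ne_zero fun h => by simp [h] at hL; linarith)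

lemma rpow_mul_log_pos (hL : 1 ≤ log n) (s : ℝ) : 0 < (n : ℝ) ^ s * log n :=
  mul_pos (rpow_pos_of_pos (natCast_pos_of_one_le_log hL) s) (by linarith)

lemma pval_pos (hc₂ : 0 < c₂) (hL : 1 ≤ log n) : 0 < pval c₂ k v h n :=
  one_div_pos.mpr (mul_pos hc₂ (rpow_pos_of_pos (rpow_mul_log_pos hL _) _))

lemma pval_le_rpow (hc₂ : 1 ≤ c₂) (hL : 1 ≤ log n) :
    pval c₂ k v h n ≤ ((n : ℝ) ^ ((v : ℝ) - k) * log n) ^ (-(1 / ((h : ℝ) - 1))) := by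
  have hY := rpow_pos_of_pos (rpow_mul_log_pos hL ((v : ℝ) - k)) (1 / ((h : ℝ) - 1))
  rw [pval, rpow_neg (rpow_mul_log_pos hL _).le, one_div (c₂ * _)]
  exact inv_anti₀ hY (le_mul_of_one_le_left hY.le hc₂)

lemma pval_le_one (hc₂ : 1 ≤ c₂) (hkv : k ≤ v) (hh : 1 ≤ h) (hL : 1 ≤ log n) :
    pval c₂ k v h n ≤ 1 := by
  refine (pval_le_rpow hc₂ hL).trans (rpow_le_one_of_one_le_of_nonpos ?_ ?_)
  · have hn : (1 : ℝ) ≤ n := by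
      exact_mod_cast Nat.one_le_iff_ne_zero.mpr fun h => by simp [h] at hL; linarith
    have hvk : (0 : ℝ) ≤ (v : ℝ) - k := sub_nonneg.mpr (by exact_mod_cast hkv)
    nlinarith [one_le_rpow hn hvk]
  · have : (1 : ℝ) ≤ h := by exact_mod_cast hh
    have : 0 ≤ 1 / ((h : ℝ) - 1) := by apply div_nonneg <;> linarith
    linarith

lemma pval_pow_le (hc₂ : 1 ≤ c₂) (hL : 1 ≤ log n) (a : ℕ) :
    pval c₂ k v h n ^ a ≤
      (n : ℝ) ^ (-((v : ℝ) - k) * (a / ((h : ℝ) - 1))) *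
        log n ^ (-(a / ((h : ℝ) - 1))) := by
  have hn := natCast_pos_of_one_le_log hL
  calc pval c₂ k v h n ^ a
      ≤ (((n : ℝ) ^ ((v : ℝ) - k) * log n) ^ (-(1 / ((h : ℝ) - 1)))) ^ a :=
        pow_le_pow_left₀ (pval_pos (by linarith) hL).le (pval_le_rpow hc₂ hL) a
    _ = _ := by
        rw [← rpow_natCast, ← rpow_mul (rpow_mul_log_pos hL _).le,
          mul_rpow (rpow_pos_of_pos hn _).le (by linarith), ← rpow_mul hn.le]
        ring_nf

lemma natCast_pow_mul_pval_pow_le_inv_log (hc₂ : 1 ≤ c₂) (hkv : k ≤ v) (hh : 2 ≤ h)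
    (hL : 1 ≤ log n) : (n : ℝ) ^ (v - k) * pval c₂ k v h n ^ (h - 1) ≤ (log n)⁻¹ := by
  have hn := natCast_pos_of_one_le_log hL
  have hh1 : (((h - 1 : ℕ) : ℝ) / ((h : ℝ) - 1)) = 1 := by
    have : (1 : ℝ) < h := by exact_mod_cast hh
    rw [Nat.cast_sub (by omega), Nat.cast_one, div_self (by linarith)]
  calc (n : ℝ) ^ (v - k) * pval c₂ k v h n ^ (h - 1)
      ≤ (n : ℝ) ^ ((v : ℝ) - k) *
          ((n : ℝ) ^ (-((v : ℝ) - k) * 1) * log n ^ (-(1 : ℝ))) := by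
        rw [← hh1, ← rpow_natCast, Nat.cast_sub hkv]
        gcongr
        exact pval_pow_le hc₂ hL _
    _ = (log n)⁻¹ := by
        rw [mul_one, ← mul_assoc, ← rpow_add hn, add_neg_cancel, rpow_zero, one_mul,
          rpow_neg_one]

lemma natCast_pow_mul_pval_pow_le {w : ℕ} (hc₂ : 1 ≤ c₂) (hh : 1 ≤ h) (hwv : w ≤ v)
    (hL : 1 ≤ log n) (a : ℕ) :
    (n : ℝ) ^ (v - w) * pval c₂ k v h n ^ a ≤
      (n : ℝ) ^ (-(((v : ℝ) - k) * (a / ((h : ℝ) - 1)) - ((v : ℝ) - w))) := by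
  have hn := natCast_pos_of_one_le_log hL
  have hc : 0 ≤ (a : ℝ) / ((h : ℝ) - 1) :=
    div_nonneg (Nat.cast_nonneg a) (sub_nonneg.mpr (by exact_mod_cast hh))
  calc (n : ℝ) ^ (v - w) * pval c₂ k v h n ^ a
      ≤ (n : ℝ) ^ ((v : ℝ) - w) *
          ((n : ℝ) ^ (-((v : ℝ) - k) * (a / ((h : ℝ) - 1))) * 1) := by
        rw [← rpow_natCast (n : ℝ) (v - w), Nat.cast_sub hwv]
        gcongr
        refine (pval_pow_le hc₂ hL a).trans ?_
        gcongr
        exact rpow_le_one_of_one_le_of_nonpos hL (neg_nonpos.mpr hc)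
    _ = _ := by
        rw [mul_one, ← rpow_add hn]
        ring_nf

end EdgeProbability

section Asymptotics

open Real Topology

variable {c₂ : ℝ} {v h w h' : ℕ}

lemma tendsto_log_natCast_atTop : Tendsto (fun n : ℕ => log n) atTop atTop :=
  tendsto_log_atTop.comp tendsto_natCast_atTop_atTop

lemma natCeil_le_two_mul {x : ℝ} (hx : 1 ≤ x) : (⌈x⌉₊ : ℝ) ≤ 2 * x := by
  linarith [Nat.ceil_lt_add_one (by linarith : 0 ≤ x)]

lemma tendsto_log_rpow_mul_rpow_neg (a : ℝ) {b : ℝ} (hb : 0 < b) :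
    Tendsto (fun n : ℕ => log n ^ a * (n : ℝ) ^ (-b)) atTop (𝓝 0) := by
  refine ((isLittleO_log_rpow_rpow_atTop a hb).tendsto_div_nhds_zero.comp
    tendsto_natCast_atTop_atTop).congr' ?_
  filter_upwards [eventually_gt_atTop 0] with n hn
  simp [rpow_neg (Nat.cast_nonneg n), div_eq_mul_inv]

lemma tendsto_overlapBound_mul_sqrt_log (hc₂ : 1 ≤ c₂) (hkv : k ≤ v) (hh : 2 ≤ h)
    (hh' : h' ≤ 1) (M : ℕ → ℕ) :
    Tendsto (fun n : ℕ => overlapBound k v h n (M n) k h' (pval c₂ k v h n) * √(log n))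
      atTop (𝓝 0) := by
  have hlim : Tendsto (fun n : ℕ => (k : ℝ) ^ k * (√(log n))⁻¹) atTop (𝓝 0) := by
    simpa using ((tendsto_inv_atTop_zero.comp (tendsto_sqrt_atTop.comp
      tendsto_log_natCast_atTop)).const_mul ((k : ℝ) ^ k))
  refine squeeze_zero' ?_ ?_ hlim <;>
    filter_upwards [tendsto_log_natCast_atTop.eventually_ge_atTop 1] with n hL
  · exact mul_nonneg (overlapBound_nonneg (pval_pos (zero_lt_one.trans_le hc₂) hL).le)
      (sqrt_nonneg _)
  have hp := pval_pos (k := k) (v := v) (h := h) (zero_lt_one.trans_le hc₂) hL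
  calc overlapBound k v h n (M n) k h' (pval c₂ k v h n) * √(log n)
      ≤ (k : ℝ) ^ k * ((n : ℝ) ^ (v - k) * pval c₂ k v h n ^ (h - 1)) * √(log n) := by
        rw [overlapBound, Nat.sub_self, pow_zero, mul_one, mul_assoc _ _ (pval _ _ _ _ _ ^ _)]
        gcongr _ * (_ * ?_) * _
        exact pow_le_pow_of_le_one hp.le (pval_le_one hc₂ hkv (by omega) hL) (by omega)
    _ ≤ (k : ℝ) ^ k * (log n)⁻¹ * √(log n) := by
        gcongr
        exact natCast_pow_mul_pval_pow_le_inv_log hc₂ hkv hh hL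
    _ = (k : ℝ) ^ k * (√(log n))⁻¹ := by rw [mul_assoc, inv_mul_eq_div, sqrt_div_self]

lemma tendsto_overlapBound_mul_sqrt_log_of_lt (hc₂ : 1 ≤ c₂) (hh : 2 ≤ h) (hkw : k < w)
    (hwv : w ≤ v)
    (hbal : ((h' : ℝ) - 1) * ((v : ℝ) - k) < ((h : ℝ) - 1) * ((w : ℝ) - k)) :
    Tendsto (fun n : ℕ => overlapBound k v h n (⌈log n⌉₊ * h * k) w h' (pval c₂ k v h n) *
      √(log n)) atTop (𝓝 0) := by
  have hh1 : (1 : ℝ) < h := by exact_mod_cast hh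
  have hkw' : (k : ℝ) < w := by exact_mod_cast hkw
  have hwv' : (w : ℝ) ≤ v := by exact_mod_cast hwv
  have hh'h : h' < h := by
    by_contra! hle
    have : (h : ℝ) ≤ h' := by exact_mod_cast hle
    nlinarith
  set b : ℝ := ((v : ℝ) - k) * ((h - h' : ℕ) / ((h : ℝ) - 1)) - ((v : ℝ) - w) with hb
  -- `0 < b` is the strict balancedness inequality `hbal`
  have hb0 : 0 < b := by
    rw [hb, Nat.cast_sub hh'h.le, mul_div_assoc', sub_pos, lt_div_iff₀ (by linarith)]
    nlinarith
  set K : ℝ := (k : ℝ) ^ k * (2 * h * k) ^ (w - k) with hK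
  have hlim : Tendsto (fun n : ℕ => K * (log n ^ ((w - k + 1 : ℕ) : ℝ) * (n : ℝ) ^ (-b)))
      atTop (𝓝 0) := by
    simpa using (tendsto_log_rpow_mul_rpow_neg _ hb0).const_mul K
  refine squeeze_zero' ?_ ?_ hlim <;>
    filter_upwards [tendsto_log_natCast_atTop.eventually_ge_atTop 1] with n hL
  · exact mul_nonneg (overlapBound_nonneg (pval_pos (zero_lt_one.trans_le hc₂) hL).le)
      (sqrt_nonneg _)
  have hp := pval_pos (k := k) (v := v) (h := h) (zero_lt_one.trans_le hc₂) hL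
  have hM : ((⌈log n⌉₊ * h * k : ℕ) : ℝ) ≤ 2 * log n * h * k := by
    push_cast
    gcongr
    exact natCeil_le_two_mul hL
  calc overlapBound k v h n (⌈log n⌉₊ * h * k) w h' (pval c₂ k v h n) * √(log n)
      = (k : ℝ) ^ k * ((⌈log n⌉₊ * h * k : ℕ) : ℝ) ^ (w - k) *
          ((n : ℝ) ^ (v - w) * pval c₂ k v h n ^ (h - h')) * √(log n) := by
        rw [overlapBound]
        ring
    _ ≤ (k : ℝ) ^ k * (2 * log n * h * k) ^ (w - k) * (n : ℝ) ^ (-b) * log n := by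
        gcongr
        · exact natCast_pow_mul_pval_pow_le hc₂ (by omega) hwv hL _
        · exact sqrt_le_self_iff.mpr (Or.inr hL)
    _ = K * (log n ^ ((w - k + 1 : ℕ) : ℝ) * (n : ℝ) ^ (-b)) := by
        rw [rpow_natCast, hK]
        ring

end Asymptotics

lemma UnifHypergraph.StrictlyBalanced.mul_lt_mul_of_isSubgraph {F F' : UnifHypergraph k}
    (hbal : F.StrictlyBalanced) (hsub : F'.IsSubgraph F) (hne : F' ≠ F)
    (hF' : k + 1 ≤ F'.verts.card) :
    ((F'.edges.card : ℝ) - 1) * ((F.verts.card : ℝ) - k) <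
      ((F.edges.card : ℝ) - 1) * ((F'.verts.card : ℝ) - k) := by
  have hpos : ∀ m : ℕ, k + 1 ≤ m → (0 : ℝ) < (m : ℝ) - k := fun m hm => by
    have : (k : ℝ) + 1 ≤ m := by exact_mod_cast hm
    linarith
  exact (div_lt_div_iff₀ (hpos _ hF') (hpos _ hbal.1)).mp (hbal.2 F' hsub hne hF')

section Patterns

open Real Topology

variable {F : UnifHypergraph k} {c₂ : ℝ}

lemma tendsto_overlapBound_of_mem_overlapPatterns (hbal : F.StrictlyBalanced)
    (hh : 2 ≤ F.edges.card) (hc₂ : 1 ≤ c₂) {T : Finset ℕ × Finset ℕ × Finset (Finset ℕ)}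
    (hT : T ∈ overlapPatterns F) :
    Tendsto (fun n : ℕ => overlapBound k F.verts.card F.edges.card n
      (⌈log n⌉₊ * F.edges.card * k) T.2.1.card T.2.2.card
      (pval c₂ k F.verts.card F.edges.card n) * √(log n)) atTop (𝓝 0) := by
  obtain ⟨e₀, W, E'⟩ := T
  simp only [overlapPatterns, mem_filter, mem_product, mem_powerset] at hT
  obtain ⟨⟨he₀, hW, hE'⟩, he₀W, hne, hE'W⟩ := hT
  have hkW : k ≤ W.card := F.edge_card e₀ he₀ ▸ card_le_card he₀W
  rcases hkW.eq_or_lt with hkW | hkW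
  · have hE'card : E'.card ≤ 1 := by
      have hE'eq : ∀ e ∈ E', e = W := fun e he => eq_of_subset_of_card_le (hE'W e he)
        (by rw [F.edge_card e (hE' he), hkW])
      exact card_le_one.mpr fun a ha b hb => (hE'eq a ha).trans (hE'eq b hb).symm
    rw [← hkW]
    exact tendsto_overlapBound_mul_sqrt_log hc₂ (by have := hbal.1; omega) hh hE'card _
  · let F' : UnifHypergraph k := ⟨W, E', hE'W, fun e he => F.edge_card e (hE' he)⟩
    have hF' : F' ≠ F := fun h => hne (congrArg UnifHypergraph.edges h)
    exact tendsto_overlapBound_mul_sqrt_log_of_lt hc₂ hh hkW (card_le_card hW)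
      (hbal.mul_lt_mul_of_isSubgraph (F' := F') ⟨hW, hE'⟩ hF' hkW)

lemma eventually_sum_overlapBound_le (hbal : F.StrictlyBalanced) (hh : 2 ≤ F.edges.card)
    (hc₂ : 1 ≤ c₂) :
    ∀ᶠ n : ℕ in atTop, ∑ T ∈ overlapPatterns F, overlapBound k F.verts.card F.edges.card n
      (⌈log n⌉₊ * F.edges.card * k) T.2.1.card T.2.2.card
      (pval c₂ k F.verts.card F.edges.card n) ≤ (√(log n))⁻¹ := by
  have hlim := tendsto_finsetSum _ fun T hT =>
    tendsto_overlapBound_of_mem_overlapPatterns hbal hh hc₂ hT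
  rw [sum_const_zero] at hlim
  filter_upwards [hlim.eventually_le_const zero_lt_one,
    tendsto_log_natCast_atTop.eventually_ge_atTop 1] with n hn hL
  rw [← sum_mul] at hn
  rwa [← one_div, le_div_iff₀ (sqrt_pos.mpr (by linarith))]

end Patterns

open Real in
lemma eventually_inv_sqrt_log_pow_ceil_le (k : ℕ) :
    ∀ᶠ n : ℕ in atTop, (√(log n))⁻¹ ^ ⌈log n⌉₊ ≤ (n : ℝ) ^ (-2 * (k : ℝ)) := by
  filter_upwards [tendsto_log_natCast_atTop.eventually_ge_atTop 1,
    (tendsto_log_atTop.comp tendsto_log_natCast_atTop).eventually_ge_atTop (4 * (k : ℝ))]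
    with n hL hlogL
  have hLpos : 0 < log n := by linarith
  have hlogL0 : 0 ≤ log (log n) := log_nonneg hL
  have hceil : log n ≤ ⌈log n⌉₊ := Nat.le_ceil _
  -- `√L = exp (log L / 2)`, so both sides are exponentials
  rw [← exp_log (sqrt_pos.mpr hLpos), log_sqrt hLpos.le, ← exp_neg, ← exp_nat_mul,
    rpow_def_of_pos (natCast_pos_of_one_le_log hL), exp_le_exp]
  simp only [Function.comp_apply] at hlogL
  nlinarith [mul_le_mul hceil hlogL (by positivity) (by positivity)]

theorem stmt_13_general (k : ℕ) (F : UnifHypergraph k)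
    (hbal : F.StrictlyBalanced)
    (hcount : F.verts.card + 1 ≤ F.edges.card + k) :
    ∃ C₂ : ℝ, 0 < C₂ ∧ ∀ c₂ : ℝ, C₂ ≤ c₂ →
      ∀ᶠ n : ℕ in atTop, ∀ f ∈ kSets n k,
        (∫ ω, (clusterCount F (Hnp n k (pval c₂ k F.verts.card F.edges.card n) ω) f
            ⌈Real.log n⌉₊ : ℝ) ∂ birthμ n) ≤ (n : ℝ) ^ (-2 * (k : ℝ)) := by
  have hkv : k + 1 ≤ F.verts.card := hbal.1
  have hh : 2 ≤ F.edges.card := by omega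
  refine ⟨1, one_pos, fun c₂ hc₂ => ?_⟩
  filter_upwards [tendsto_log_natCast_atTop.eventually_ge_atTop 1,
    eventually_sum_overlapBound_le hbal hh hc₂, eventually_inv_sqrt_log_pow_ceil_le k]
    with n hL hpatterns hceil f hf
  have hp0 := (pval_pos (k := k) (v := F.verts.card) (h := F.edges.card)
    (zero_lt_one.trans_le hc₂) hL).le
  have hp1 := pval_le_one (k := k) (v := F.verts.card) (h := F.edges.card) hc₂ (by omega)
    (by omega) hL
  have : Nonempty (Fin n) := ⟨⟨0, Nat.cast_pos.mp (natCast_pos_of_one_le_log hL)⟩⟩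
  rw [integral_clusterCount hp0 hp1]
  refine (clusterShapeSum_le_pow hp0 hp1 hh (mem_powersetCard.mp hf).2
    (fun D hfD hD => ?_) (Nat.one_le_ceil_iff.mpr (by linarith)) le_rfl).trans hceil
  simpa using (freshCopySum_le_sum_overlapBound hp0 (mem_powersetCard.mp hf).2 hfD hD).trans
    (by simpa using hpatterns)

/-- The expected number of `(⌈log n⌉,f)`-clusters in `H_{n,p}`
is at most `n^{-2k}`. -/
theorem stmt_13 (k : ℕ) (hk : 2 ≤ k) (F : UnifHypergraph k)
    (hbal : F.StrictlyBalanced)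
    (hcount : F.verts.card + 1 ≤ F.edges.card + k)
    (hdeg : 2 ≤ F.maxDeg (k - 1)) :
    ∃ C₂ : ℝ, 0 < C₂ ∧ ∀ c₂ : ℝ, C₂ ≤ c₂ →
      ∀ᶠ n : ℕ in atTop, ∀ f ∈ kSets n k,
        (∫ ω, (clusterCount F (Hnp n k (pval c₂ k F.verts.card F.edges.card n) ω) f
            ⌈Real.log n⌉₊ : ℝ) ∂ birthμ n) ≤ (n : ℝ) ^ (-2 * (k : ℝ)) :=
  stmt_13_general k F hbal hcount
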